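/- Let φ ∈ S(ℝ) be nonzero with H₀φ = λφ for some λ ∈ ℂ, where H₀ = −d²/dx² + x², and let θ ∈ S(ℝ) be nonzero. Then the function F(x, y) = W(φ, θ)(x/2, y/2) belongs to S(ℝ²), is nonzero, and is an eigenfunction of the Landau Hamiltonian: H̃_L F = λ F, where H̃_L = −(∂_x² + ∂_y²) + i(x∂_y − y∂_x) + (1/4)(x² + y²). -/

import Mathlib

open MeasureTheory Complex
open scoped ComplexConjugate Real

noncomputable section

/-- The cross-Wigner transform (one dimension):
`W(φ,ψ)(x,ξ) = (2π)⁻¹ ∫ e^{-iξt} φ(x+t/2) conj(ψ(x−t/2)) dt`. -/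
def crossWigner1 (φ ψ : ℝ → ℂ) (x ξ : ℝ) : ℂ :=
  ((2 * π)⁻¹ : ℝ) *
    ∫ t : ℝ, Complex.exp (-(Complex.I * ξ * t)) * φ (x + t / 2) * conj (ψ (x - t / 2))

/-- Partial derivative in the first variable. -/
def pdx (f : ℝ → ℝ → ℂ) (x y : ℝ) : ℂ := deriv (fun u => f u y) x

/-- Partial derivative in the second variable. -/
def pdy (f : ℝ → ℝ → ℂ) (x y : ℝ) : ℂ := deriv (fun v => f x v) y

/-- The Landau Hamiltonian
`H̃_L F = −(∂ₓ²F + ∂ᵧ²F) + i(x ∂ᵧF − y ∂ₓF) + (1/4)(x² + y²)F`. -/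
def landauOp (f : ℝ → ℝ → ℂ) (x y : ℝ) : ℂ :=
  -(pdx (pdx f) x y + pdy (pdy f) x y)
    + Complex.I * (x * pdy f x y - y * pdx f x y)
    + (((x ^ 2 + y ^ 2) / 4 : ℝ) : ℂ) * f x y

/-- The harmonic oscillator Hamiltonian `H₀φ = −φ'' + x²φ`. -/
def harmOsc (φ : ℝ → ℂ) (x : ℝ) : ℂ := -deriv (deriv φ) x + (x : ℂ) ^ 2 * φ x

/-!
Put `Ψ(u, t) = φ(u + t/2) · conj θ(u − t/2)`, a Schwartz function on `ℝ²` (a tensor product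
composed with a linear change of variables), so that `2π · W(φ, θ)(x, ξ)` is the partial Fourier
transform `𝒫Ψ(x, ξ) = ∫ e^{-iξt} Ψ(x, t) dt`. Under `𝒫`, `∂ₓ` and multiplication by `x` pass
through, `∂_ξ` becomes multiplication by `-it`, and multiplication by `ξ` becomes `-i∂ₜ`
(integration by parts). These rules show, by induction on the order of derivatives and weights,
that `𝒫` maps `S(ℝ²)` to itself; Fourier inversion on each fibre makes it injective.

In the coordinates `a = u + t/2`, `b = u − t/2` one has `∂_a = ½∂_u + ∂_t`, so `H₀` acting on the
first factor of `Ψ` is a second-order operator in `(u, t)`. Transported through `𝒫` it becomes the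
Landau Hamiltonian in the rescaled variables `(x/2, y/2)`, which gives the eigenvalue equation.
-/

open SchwartzMap LineDeriv FourierTransform
open scoped ContDiff

local notation "∂₁" => LineDeriv.lineDerivOp ((1 : ℝ), (0 : ℝ))
local notation "∂₂" => LineDeriv.lineDerivOp ((0 : ℝ), (1 : ℝ))

section Calculus

variable {D E F : Type*} [NormedAddCommGroup D] [NormedSpace ℝ D] [NormedAddCommGroup E]
  [NormedSpace ℝ E] [NormedAddCommGroup F] [NormedSpace ℝ F]

theorem norm_iteratedFDeriv_comp_le_of_opNorm_le_one {f : E → F} (hf : ContDiff ℝ ∞ f)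
    {A : D →L[ℝ] E} (hA : ‖A‖ ≤ 1) (n : ℕ) (z : D) :
    ‖iteratedFDeriv ℝ n (f ∘ A) z‖ ≤ ‖iteratedFDeriv ℝ n f (A z)‖ := by
  rw [A.iteratedFDeriv_comp_right hf z (by exact_mod_cast le_top)]
  exact (ContinuousMultilinearMap.norm_compContinuousLinearMap_le _ _).trans
    (mul_le_of_le_one_right (norm_nonneg _)
      (Finset.prod_le_one (fun _ _ => norm_nonneg _) fun _ _ => hA))

theorem norm_iteratedFDeriv_clm_comp_add_le {A B : E →L[ℝ] F} (hA : ‖A‖ ≤ 1) (hB : ‖B‖ ≤ 1)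
    {g h : D → E} {n : ℕ} (hg : ContDiff ℝ n g) (hh : ContDiff ℝ n h) (z : D) :
    ‖iteratedFDeriv ℝ n (fun z => A (g z) + B (h z)) z‖ ≤
      ‖iteratedFDeriv ℝ n g z‖ + ‖iteratedFDeriv ℝ n h z‖ := by
  rw [show (fun z => A (g z) + B (h z)) = (A ∘ g) + (B ∘ h) from rfl,
    iteratedFDeriv_add_apply (A.contDiff.comp hg).contDiffAt (B.contDiff.comp hh).contDiffAt]
  refine (norm_add_le _ _).trans (add_le_add ?_ ?_)
  · rw [A.iteratedFDeriv_comp_left hg.contDiffAt le_rfl]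
    exact (A.norm_compContinuousMultilinearMap_le _).trans
      (mul_le_of_le_one_left (norm_nonneg _) hA)
  · rw [B.iteratedFDeriv_comp_left hh.contDiffAt le_rfl]
    exact (B.norm_compContinuousMultilinearMap_le _).trans
      (mul_le_of_le_one_left (norm_nonneg _) hB)

end Calculus

theorem Continuous.eq_zero_of_fourier_eq_zero {V E : Type*} [NormedAddCommGroup V]
    [InnerProductSpace ℝ V] [FiniteDimensional ℝ V] [MeasurableSpace V] [BorelSpace V]
    [NormedAddCommGroup E] [NormedSpace ℂ E] [CompleteSpace E] {f : V → E}
    (h : Continuous f) (hf : Integrable f) (h0 : 𝓕 f = 0) : f = 0 := by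
  rw [← h.fourierInv_fourier_eq hf (by rw [h0]; exact integrable_zero _ _ _), h0]
  ext v
  simp [Real.fourierInv_eq]

namespace SchwartzMap

theorem coe_lineDerivOp_one {F : Type*} [NormedAddCommGroup F] [NormedSpace ℝ F] (f : 𝓢(ℝ, F)) :
    ⇑(∂_{(1 : ℝ)} f : 𝓢(ℝ, F)) = deriv f :=
  rfl

section Tensor

variable {E F 𝔸 : Type*} [NormedAddCommGroup E] [NormedSpace ℝ E]
  [NormedAddCommGroup F] [NormedSpace ℝ F] [NormedRing 𝔸] [NormedAlgebra ℝ 𝔸]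

theorem norm_iteratedFDeriv_mul_comp_fst_snd_le {f : E → 𝔸} {g : F → 𝔸} (hf : ContDiff ℝ ∞ f)
    (hg : ContDiff ℝ ∞ g) (n : ℕ) (z : E × F) :
    ‖iteratedFDeriv ℝ n (fun z : E × F => f z.1 * g z.2) z‖ ≤
      ∑ i ∈ Finset.range (n + 1), (n.choose i : ℝ) *
        ‖iteratedFDeriv ℝ i f z.1‖ * ‖iteratedFDeriv ℝ (n - i) g z.2‖ := by
  refine (norm_iteratedFDeriv_mul_le (hf.comp contDiff_fst) (hg.comp contDiff_snd) z
    (by exact_mod_cast le_top)).trans (Finset.sum_le_sum fun i _ => ?_)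
  gcongr
  · exact norm_iteratedFDeriv_comp_le_of_opNorm_le_one hf
      (ContinuousLinearMap.norm_fst_le ℝ E F) i z
  · exact norm_iteratedFDeriv_comp_le_of_opNorm_le_one hg
      (ContinuousLinearMap.norm_snd_le ℝ E F) (n - i) z

def tensor (f : 𝓢(E, 𝔸)) (g : 𝓢(F, 𝔸)) : 𝓢(E × F, 𝔸) where
  toFun z := f z.1 * g z.2
  smooth' := ((f.smooth ⊤).comp contDiff_fst).mul ((g.smooth ⊤).comp contDiff_snd)
  decay' k n := by
    set Sf := 2 ^ k * (Finset.Iic (k, n)).sup (schwartzSeminormFamily ℝ E 𝔸) f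
    set Sg := 2 ^ k * (Finset.Iic (k, n)).sup (schwartzSeminormFamily ℝ F 𝔸) g
    refine ⟨2 ^ n * (Sf * Sg), fun z => ?_⟩
    have hz : ‖z‖ ^ k ≤ (1 + ‖z.1‖) ^ k * (1 + ‖z.2‖) ^ k := by
      rw [← mul_pow]
      gcongr
      exact max_le (by nlinarith [norm_nonneg z.1, norm_nonneg z.2])
        (by nlinarith [norm_nonneg z.1, norm_nonneg z.2])
    calc ‖z‖ ^ k * ‖iteratedFDeriv ℝ n (fun z : E × F => f z.1 * g z.2) z‖
        ≤ ∑ i ∈ Finset.range (n + 1), (n.choose i : ℝ) *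
            (((1 + ‖z.1‖) ^ k * ‖iteratedFDeriv ℝ i f z.1‖) *
              ((1 + ‖z.2‖) ^ k * ‖iteratedFDeriv ℝ (n - i) g z.2‖)) := by
          grw [hz, norm_iteratedFDeriv_mul_comp_fst_snd_le (f.smooth ⊤) (g.smooth ⊤),
            Finset.mul_sum]
          exact Finset.sum_le_sum fun i _ => le_of_eq (by ring)
      _ ≤ ∑ i ∈ Finset.range (n + 1), (n.choose i : ℝ) * (Sf * Sg) := by
          gcongr with i hi
          · exact one_add_le_sup_seminorm_apply (𝕜 := ℝ) (m := (k, n)) le_rfl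
              (Nat.lt_succ_iff.mp (Finset.mem_range.mp hi)) f z.1
          · exact one_add_le_sup_seminorm_apply (𝕜 := ℝ) (m := (k, n)) le_rfl
              (Nat.sub_le n i) g z.2
      _ = 2 ^ n * (Sf * Sg) := by
          rw [← Finset.sum_mul, ← Nat.cast_sum, Nat.sum_range_choose]
          push_cast
          ring

@[simp]
theorem tensor_apply (f : 𝓢(E, 𝔸)) (g : 𝓢(F, 𝔸)) (z : E × F) : f.tensor g z = f z.1 * g z.2 :=
  rfl

theorem lineDerivOp_tensor (v : E × F) (f : 𝓢(E, 𝔸)) (g : 𝓢(F, 𝔸)) :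
    ∂_{v} (f.tensor g) = (∂_{v.1} f).tensor g + f.tensor (∂_{v.2} g) := by
  ext z
  have hf : HasFDerivAt (fun z : E × F => f z.1)
      ((fderiv ℝ f z.1).comp (ContinuousLinearMap.fst ℝ E F)) z :=
    f.differentiableAt.hasFDerivAt.comp z hasFDerivAt_fst
  have hg : HasFDerivAt (fun z : E × F => g z.2)
      ((fderiv ℝ g z.2).comp (ContinuousLinearMap.snd ℝ E F)) z :=
    g.differentiableAt.hasFDerivAt.comp z hasFDerivAt_snd
  rw [lineDerivOp_apply_eq_fderiv,
    show ⇑(f.tensor g) = (fun z : E × F => f z.1) * fun z => g z.2 from rfl, (hf.mul' hg).fderiv]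
  simp [lineDerivOp_apply_eq_fderiv, add_comm]

theorem tensor_eq_zero_iff [NoZeroDivisors 𝔸] {f : 𝓢(E, 𝔸)} {g : 𝓢(F, 𝔸)} :
    f.tensor g = 0 ↔ f = 0 ∨ g = 0 := by
  refine ⟨fun h => ?_, ?_⟩
  · by_contra! hfg
    obtain ⟨a, ha⟩ : ∃ a, f a ≠ 0 := by
      by_contra! h'
      exact hfg.1 (ext h')
    obtain ⟨b, hb⟩ : ∃ b, g b ≠ 0 := by
      by_contra! h'
      exact hfg.2 (ext h')
    exact mul_ne_zero ha hb (by simpa using congrArg (· (a, b)) h)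
  · rintro (rfl | rfl) <;> ext <;> simp

end Tensor

section PartialFourier

variable (Φ : 𝓢(ℝ × ℝ, ℂ))

theorem exists_norm_le_mul_inv_one_add_sq_snd :
    ∃ C, ∀ z : ℝ × ℝ, ‖Φ z‖ ≤ C * (1 + z.2 ^ 2)⁻¹ := by
  refine ⟨SchwartzMap.seminorm ℝ 0 0 Φ + SchwartzMap.seminorm ℝ 2 0 Φ, fun z => ?_⟩
  have h₀ := norm_le_seminorm ℝ Φ z
  have h₂ := norm_pow_mul_le_seminorm ℝ Φ 2 z
  have hz : z.2 ^ 2 ≤ ‖z‖ ^ 2 := by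
    rw [← sq_abs]
    gcongr
    exact norm_snd_le z
  rw [← div_eq_mul_inv, le_div_iff₀ (by positivity)]
  nlinarith [norm_nonneg (Φ z)]

theorem integrable_cexp_mul_apply (x ξ : ℝ) :
    Integrable fun t : ℝ => cexp (-(I * ξ * t)) * Φ (x, t) := by
  obtain ⟨C, hC⟩ := Φ.exists_norm_le_mul_inv_one_add_sq_snd
  refine (integrable_inv_one_add_sq.const_mul C).mono' (by fun_prop) (.of_forall fun t => ?_)
  rw [norm_mul, Complex.norm_exp]
  simpa using hC (x, t)

def partialFourierIntegral : 𝓢(ℝ × ℝ, ℂ) →ₗ[ℂ] ℝ × ℝ → ℂ where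
  toFun Ψ z := ∫ t : ℝ, cexp (-(I * z.2 * t)) * Ψ (z.1, t)
  map_add' Ψ₁ Ψ₂ := by
    ext z
    simp only [add_apply, mul_add, Pi.add_apply]
    exact integral_add (Ψ₁.integrable_cexp_mul_apply _ _) (Ψ₂.integrable_cexp_mul_apply _ _)
  map_smul' c Ψ := by
    ext z
    simp only [smul_apply, smul_eq_mul, RingHom.id_apply, Pi.smul_apply, ← integral_const_mul]
    congr 1 with t
    ring

theorem partialFourierIntegral_apply (z : ℝ × ℝ) :
    partialFourierIntegral Φ z = ∫ t : ℝ, cexp (-(I * z.2 * t)) * Φ (z.1, t) :=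
  rfl

def mulFst : 𝓢(ℝ × ℝ, ℂ) →L[ℂ] 𝓢(ℝ × ℝ, ℂ) := smulLeftCLM ℂ fun z : ℝ × ℝ => (z.1 : ℂ)

def mulNegISnd : 𝓢(ℝ × ℝ, ℂ) →L[ℂ] 𝓢(ℝ × ℝ, ℂ) := smulLeftCLM ℂ fun z : ℝ × ℝ => -(I * z.2)

@[simp]
theorem mulFst_apply (z : ℝ × ℝ) : mulFst Φ z = z.1 * Φ z := by
  have h : (fun z : ℝ × ℝ => (z.1 : ℂ)).HasTemperateGrowth :=
    (ofRealCLM.comp (.fst ℝ ℝ ℝ)).hasTemperateGrowth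
  rw [mulFst, smulLeftCLM_apply_apply h, smul_eq_mul]

@[simp]
theorem mulNegISnd_apply (z : ℝ × ℝ) : mulNegISnd Φ z = -(I * z.2) * Φ z := by
  have h : (fun z : ℝ × ℝ => -(I * z.2)).HasTemperateGrowth := by
    convert ((-I) • ofRealCLM.comp (.snd ℝ ℝ ℝ)).hasTemperateGrowth using 1
    ext z
    simp
  rw [mulNegISnd, smulLeftCLM_apply_apply h, smul_eq_mul]

theorem hasDerivAt_apply_fst (x t : ℝ) :
    HasDerivAt (fun u : ℝ => Φ (u, t)) (∂₁ Φ (x, t)) x :=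
  (Φ.hasFDerivAt (x, t)).comp_hasDerivAt x ((hasDerivAt_id x).prodMk (hasDerivAt_const x t))

theorem hasDerivAt_apply_snd (x t : ℝ) :
    HasDerivAt (fun s : ℝ => Φ (x, s)) (∂₂ Φ (x, t)) t :=
  (Φ.hasFDerivAt (x, t)).comp_hasDerivAt t ((hasDerivAt_const t x).prodMk (hasDerivAt_id t))

theorem partialFourierIntegral_mulFst (z : ℝ × ℝ) :
    partialFourierIntegral (mulFst Φ) z = z.1 * partialFourierIntegral Φ z := by
  simp only [partialFourierIntegral_apply, mulFst_apply, ← integral_const_mul]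
  congr 1 with t
  ring

theorem partialFourierIntegral_lineDerivOp_snd (z : ℝ × ℝ) :
    partialFourierIntegral (∂₂ Φ) z = I * z.2 * partialFourierIntegral Φ z := by
  have hexp (t : ℝ) : HasDerivAt (fun s : ℝ => cexp (-(I * z.2 * s)))
      (-(I * z.2) * cexp (-(I * z.2 * t))) t := by
    simpa [mul_comm] using ((hasDerivAt_id (t : ℂ)).const_mul (-(I * z.2))).cexp.comp_ofReal
  simp only [partialFourierIntegral_apply]
  rw [integral_mul_deriv_eq_deriv_mul_of_integrable (fun t _ => hexp t)
    (fun t _ => Φ.hasDerivAt_apply_snd z.1 t) ((∂₂ Φ).integrable_cexp_mul_apply z.1 z.2)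
    (by simpa only [Pi.mul_def, mul_assoc] using
      (Φ.integrable_cexp_mul_apply z.1 z.2).const_mul (-(I * z.2)))
    (Φ.integrable_cexp_mul_apply z.1 z.2), ← integral_const_mul, ← integral_neg]
  congr 1 with t
  ring

theorem partialFourierIntegral_eq_fourier (x w : ℝ) :
    partialFourierIntegral Φ (x, 2 * π * w) = 𝓕 (fun t : ℝ => Φ (x, t)) w := by
  rw [Real.fourier_real_eq_integral_exp_smul, partialFourierIntegral_apply]
  congr 1 with t
  rw [smul_eq_mul]
  push_cast
  ring_nf

theorem partialFourierIntegral_injective : Function.Injective partialFourierIntegral := by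
  refine (injective_iff_map_eq_zero _).2 fun Ψ h => ext fun z => ?_
  have hfiber : (fun t : ℝ => Ψ (z.1, t)) = 0 := by
    refine Continuous.eq_zero_of_fourier_eq_zero (by fun_prop) ?_ ?_
    · simpa using Ψ.integrable_cexp_mul_apply z.1 0
    · ext w
      rw [← partialFourierIntegral_eq_fourier, h]
      rfl
  exact congrFun hfiber z.2

def smulRightFst : ℂ →L[ℝ] ℝ × ℝ →L[ℝ] ℂ :=
  ContinuousLinearMap.smulRightL ℝ (ℝ × ℝ) ℂ (.fst ℝ ℝ ℝ)

def smulRightSnd : ℂ →L[ℝ] ℝ × ℝ →L[ℝ] ℂ :=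
  ContinuousLinearMap.smulRightL ℝ (ℝ × ℝ) ℂ (.snd ℝ ℝ ℝ)

@[simp]
theorem smulRightFst_apply_apply (a : ℂ) (v : ℝ × ℝ) : smulRightFst a v = v.1 • a :=
  rfl

@[simp]
theorem smulRightSnd_apply_apply (a : ℂ) (v : ℝ × ℝ) : smulRightSnd a v = v.2 • a :=
  rfl

theorem norm_smulRightFst_le : ‖smulRightFst‖ ≤ 1 :=
  (ContinuousLinearMap.norm_smulRightL _).trans_le (ContinuousLinearMap.norm_fst_le ℝ ℝ ℝ)

theorem norm_smulRightSnd_le : ‖smulRightSnd‖ ≤ 1 :=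
  (ContinuousLinearMap.norm_smulRightL _).trans_le (ContinuousLinearMap.norm_snd_le ℝ ℝ ℝ)

theorem norm_smulRightFst_add_smulRightSnd_le (a b : ℂ) :
    ‖smulRightFst a + smulRightSnd b‖ ≤ ‖a‖ + ‖b‖ :=
  (norm_add_le _ _).trans <| add_le_add
    ((smulRightFst.le_opNorm a).trans (mul_le_of_le_one_left (norm_nonneg a) norm_smulRightFst_le))
    ((smulRightSnd.le_opNorm b).trans (mul_le_of_le_one_left (norm_nonneg b) norm_smulRightSnd_le))

theorem hasFDerivAt_cexp_mul_apply (t : ℝ) (w : ℝ × ℝ) :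
    HasFDerivAt (fun w : ℝ × ℝ => cexp (-(I * w.2 * t)) * Φ (w.1, t))
      (smulRightFst (cexp (-(I * w.2 * t)) * ∂₁ Φ (w.1, t)) +
        smulRightSnd (cexp (-(I * w.2 * t)) * mulNegISnd Φ (w.1, t))) w := by
  have hexp : HasDerivAt (fun s : ℝ => cexp (-(I * s * t)))
      (-(I * t) * cexp (-(I * w.2 * t))) w.2 := by
    simpa [mul_comm, mul_left_comm] using
      ((hasDerivAt_id (w.2 : ℂ)).mul_const (-(I * t))).cexp.comp_ofReal
  have h := (hexp.hasFDerivAt.comp w hasFDerivAt_snd).mul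
    ((Φ.hasDerivAt_apply_fst w.1 t).hasFDerivAt.comp w hasFDerivAt_fst)
  refine h.congr_fderiv (ContinuousLinearMap.ext fun v => ?_)
  simp
  ring

theorem hasFDerivAt_partialFourierIntegral (z : ℝ × ℝ) :
    HasFDerivAt (partialFourierIntegral Φ)
      (smulRightFst (partialFourierIntegral (∂₁ Φ) z) +
        smulRightSnd (partialFourierIntegral (mulNegISnd Φ) z)) z := by
  obtain ⟨C₁, hC₁⟩ := (∂₁ Φ).exists_norm_le_mul_inv_one_add_sq_snd
  obtain ⟨C₂, hC₂⟩ := (mulNegISnd Φ).exists_norm_le_mul_inv_one_add_sq_snd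
  have hint₁ := (∂₁ Φ).integrable_cexp_mul_apply z.1 z.2
  have hint₂ := (mulNegISnd Φ).integrable_cexp_mul_apply z.1 z.2
  have h := hasFDerivAt_integral_of_dominated_of_fderiv_le (x₀ := z) Filter.univ_mem
    (F' := fun w (t : ℝ) => smulRightFst (cexp (-(I * w.2 * t)) * ∂₁ Φ (w.1, t)) +
      smulRightSnd (cexp (-(I * w.2 * t)) * mulNegISnd Φ (w.1, t)))
    (.of_forall fun w => (Φ.integrable_cexp_mul_apply w.1 w.2).aestronglyMeasurable)
    (Φ.integrable_cexp_mul_apply z.1 z.2)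
    ((smulRightFst.integrable_comp hint₁).add (smulRightSnd.integrable_comp hint₂)).1
    (.of_forall fun t w _ => (norm_smulRightFst_add_smulRightSnd_le _ _).trans ?_)
    (integrable_inv_one_add_sq.const_mul (C₁ + C₂))
    (.of_forall fun t w _ => Φ.hasFDerivAt_cexp_mul_apply t w)
  · rwa [integral_add (smulRightFst.integrable_comp hint₁) (smulRightSnd.integrable_comp hint₂),
      smulRightFst.integral_comp_comm hint₁, smulRightSnd.integral_comp_comm hint₂] at h
  · simp only [norm_mul, Complex.norm_exp, add_mul]
    simpa using add_le_add (hC₁ (w.1, t)) (hC₂ (w.1, t))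

theorem differentiable_partialFourierIntegral : Differentiable ℝ (partialFourierIntegral Φ) :=
  fun z => (Φ.hasFDerivAt_partialFourierIntegral z).differentiableAt

theorem fderiv_partialFourierIntegral :
    fderiv ℝ (partialFourierIntegral Φ) = fun z =>
      smulRightFst (partialFourierIntegral (∂₁ Φ) z) +
        smulRightSnd (partialFourierIntegral (mulNegISnd Φ) z) :=
  funext fun z => (Φ.hasFDerivAt_partialFourierIntegral z).fderiv

theorem contDiff_partialFourierIntegral (n : ℕ) : ContDiff ℝ n (partialFourierIntegral Φ) := by
  induction n generalizing Φ with
  | zero => exact contDiff_zero.2 Φ.differentiable_partialFourierIntegral.continuous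
  | succ n ih =>
    rw [Nat.cast_succ]
    refine contDiff_succ_iff_fderiv.2 ⟨Φ.differentiable_partialFourierIntegral,
      fun h => absurd h (WithTop.natCast_ne_top n), ?_⟩
    rw [fderiv_partialFourierIntegral]
    exact (smulRightFst.contDiff.comp (ih _)).add (smulRightSnd.contDiff.comp (ih _))

theorem norm_iteratedFDeriv_succ_partialFourierIntegral_le (n : ℕ) (z : ℝ × ℝ) :
    ‖iteratedFDeriv ℝ (n + 1) (partialFourierIntegral Φ) z‖ ≤
      ‖iteratedFDeriv ℝ n (partialFourierIntegral (∂₁ Φ)) z‖ +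
        ‖iteratedFDeriv ℝ n (partialFourierIntegral (mulNegISnd Φ)) z‖ := by
  rw [← norm_iteratedFDeriv_fderiv, fderiv_partialFourierIntegral]
  exact norm_iteratedFDeriv_clm_comp_add_le norm_smulRightFst_le norm_smulRightSnd_le
    (contDiff_partialFourierIntegral _ n) (contDiff_partialFourierIntegral _ n) z

theorem exists_norm_partialFourierIntegral_le : ∃ C, ∀ z, ‖partialFourierIntegral Φ z‖ ≤ C := by
  obtain ⟨C, hC⟩ := Φ.exists_norm_le_mul_inv_one_add_sq_snd
  refine ⟨C * π, fun z => ?_⟩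
  rw [← integral_univ_inv_one_add_sq, ← integral_const_mul]
  refine norm_integral_le_of_norm_le (integrable_inv_one_add_sq.const_mul C)
    (.of_forall fun t => ?_)
  rw [norm_mul, Complex.norm_exp]
  simpa using hC (z.1, t)

theorem exists_pow_mul_norm_partialFourierIntegral_le (k : ℕ) :
    ∃ C, ∀ z, ‖z‖ ^ k * ‖partialFourierIntegral Φ z‖ ≤ C := by
  induction k generalizing Φ with
  | zero => simpa using Φ.exists_norm_partialFourierIntegral_le
  | succ k ih =>
    obtain ⟨C₁, hC₁⟩ := ih (mulFst Φ)
    obtain ⟨C₂, hC₂⟩ := ih (∂₂ Φ)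
    refine ⟨C₁ + C₂, fun z => ?_⟩
    have hz : ‖z‖ ≤ ‖z.1‖ + ‖z.2‖ := max_le_add_of_nonneg (norm_nonneg _) (norm_nonneg _)
    have h₁ : ‖z.1‖ * ‖partialFourierIntegral Φ z‖ = ‖partialFourierIntegral (mulFst Φ) z‖ := by
      simp [partialFourierIntegral_mulFst]
    have h₂ : ‖z.2‖ * ‖partialFourierIntegral Φ z‖ = ‖partialFourierIntegral (∂₂ Φ) z‖ := by
      simp [partialFourierIntegral_lineDerivOp_snd]
    calc ‖z‖ ^ (k + 1) * ‖partialFourierIntegral Φ z‖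
        ≤ ‖z‖ ^ k * ((‖z.1‖ + ‖z.2‖) * ‖partialFourierIntegral Φ z‖) := by
          rw [pow_succ, mul_assoc]
          gcongr
      _ = ‖z‖ ^ k * ‖partialFourierIntegral (mulFst Φ) z‖ +
          ‖z‖ ^ k * ‖partialFourierIntegral (∂₂ Φ) z‖ := by
          rw [← h₁, ← h₂]
          ring
      _ ≤ C₁ + C₂ := add_le_add (hC₁ z) (hC₂ z)

theorem exists_pow_mul_norm_iteratedFDeriv_partialFourierIntegral_le (k n : ℕ) :
    ∃ C, ∀ z, ‖z‖ ^ k * ‖iteratedFDeriv ℝ n (partialFourierIntegral Φ) z‖ ≤ C := by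
  induction n generalizing Φ with
  | zero => simpa using Φ.exists_pow_mul_norm_partialFourierIntegral_le k
  | succ n ih =>
    obtain ⟨C₁, hC₁⟩ := ih (∂₁ Φ)
    obtain ⟨C₂, hC₂⟩ := ih (mulNegISnd Φ)
    refine ⟨C₁ + C₂, fun z => ?_⟩
    calc _ ≤ ‖z‖ ^ k * (‖iteratedFDeriv ℝ n (partialFourierIntegral (∂₁ Φ)) z‖ +
            ‖iteratedFDeriv ℝ n (partialFourierIntegral (mulNegISnd Φ)) z‖) := by
          gcongr
          exact Φ.norm_iteratedFDeriv_succ_partialFourierIntegral_le n z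
      _ ≤ C₁ + C₂ := by
          rw [mul_add]
          exact add_le_add (hC₁ z) (hC₂ z)

def partialFourier : 𝓢(ℝ × ℝ, ℂ) where
  toFun := partialFourierIntegral Φ
  smooth' := contDiff_infty.2 Φ.contDiff_partialFourierIntegral
  decay' k n := Φ.exists_pow_mul_norm_iteratedFDeriv_partialFourierIntegral_le k n

@[simp]
theorem coe_partialFourier : ⇑(partialFourier Φ) = partialFourierIntegral Φ :=
  rfl

theorem lineDerivOp_fst_partialFourier : ∂₁ (partialFourier Φ) = partialFourier (∂₁ Φ) := by
  ext z
  simp [lineDerivOp_apply_eq_fderiv, fderiv_partialFourierIntegral]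

theorem lineDerivOp_snd_partialFourier : ∂₂ (partialFourier Φ) = partialFourier (mulNegISnd Φ) := by
  ext z
  simp [lineDerivOp_apply_eq_fderiv, fderiv_partialFourierIntegral]

theorem partialFourier_eq_zero_iff : partialFourier Φ = 0 ↔ Φ = 0 := by
  refine ⟨fun h => partialFourierIntegral_injective (funext fun z => ?_), fun h => ?_⟩
  · simpa using congrArg (· z) h
  · ext z
    simp [h]

end PartialFourier

end SchwartzMap

section Conj

variable {E : Type*} [NormedAddCommGroup E] [NormedSpace ℝ E]

def conjSchwartz (θ : 𝓢(E, ℂ)) : 𝓢(E, ℂ) :=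
  postcompCLM (𝕜 := ℝ) (conjCLE : ℂ →L[ℝ] ℂ) θ

@[simp]
theorem conjSchwartz_apply (θ : 𝓢(E, ℂ)) (x : E) : conjSchwartz θ x = conj (θ x) :=
  rfl

@[simp]
theorem conjSchwartz_eq_zero_iff {θ : 𝓢(E, ℂ)} : conjSchwartz θ = 0 ↔ θ = 0 := by
  refine ⟨fun h => ext fun x => ?_, fun h => ext fun x => by simp [h]⟩
  simpa using congrArg (· x) h

end Conj

def wignerCoords : (ℝ × ℝ) ≃L[ℝ] ℝ × ℝ :=
  let p₁ := ContinuousLinearMap.fst ℝ ℝ ℝ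
  let p₂ := ContinuousLinearMap.snd ℝ ℝ ℝ
  .equivOfInverse ((p₁ + (2⁻¹ : ℝ) • p₂).prod (p₁ - (2⁻¹ : ℝ) • p₂))
    (((2⁻¹ : ℝ) • (p₁ + p₂)).prod (p₁ - p₂))
    (fun z => by ext <;> simp [p₁, p₂] <;> ring) (fun z => by ext <;> simp [p₁, p₂] <;> ring)

@[simp]
theorem wignerCoords_apply (z : ℝ × ℝ) : wignerCoords z = (z.1 + z.2 / 2, z.1 - z.2 / 2) := by
  simp [wignerCoords, div_eq_inv_mul]

def wignerKernel (f g : 𝓢(ℝ, ℂ)) : 𝓢(ℝ × ℝ, ℂ) :=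
  compCLMOfContinuousLinearEquiv ℂ wignerCoords (f.tensor g)

@[simp]
theorem wignerKernel_apply (f g : 𝓢(ℝ, ℂ)) (z : ℝ × ℝ) :
    wignerKernel f g z = f (z.1 + z.2 / 2) * g (z.1 - z.2 / 2) := by
  simp [wignerKernel]

theorem wignerKernel_eq_zero_iff {f g : 𝓢(ℝ, ℂ)} : wignerKernel f g = 0 ↔ f = 0 ∨ g = 0 := by
  rw [← tensor_eq_zero_iff]
  refine ⟨fun h => ext fun p => ?_, fun h => by simp [wignerKernel, h]⟩
  simpa [wignerKernel] using congrArg (· (wignerCoords.symm p)) h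

theorem crossWigner1_eq (φ θ : 𝓢(ℝ, ℂ)) (x ξ : ℝ) :
    crossWigner1 φ θ x ξ =
      ((2 * π)⁻¹ : ℝ) * partialFourier (wignerKernel φ (conjSchwartz θ)) (x, ξ) := by
  simp only [crossWigner1, coe_partialFourier, partialFourierIntegral_apply, wignerKernel_apply,
    conjSchwartz_apply, mul_assoc]

theorem lineDerivOp_wignerKernel (v : ℝ × ℝ) (f g : 𝓢(ℝ, ℂ)) :
    ∂_{v} (wignerKernel f g) =
      wignerKernel (∂_{v.1 + v.2 / 2} f) g + wignerKernel f (∂_{v.1 - v.2 / 2} g) := by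
  simp [wignerKernel, lineDerivOp_compCLMOfContinuousLinearEquiv, lineDerivOp_tensor]

theorem lineDerivOp_fst_wignerKernel (f g : 𝓢(ℝ, ℂ)) :
    ∂₁ (wignerKernel f g) = wignerKernel (∂_{(1 : ℝ)} f) g + wignerKernel f (∂_{(1 : ℝ)} g) := by
  simp [lineDerivOp_wignerKernel]

theorem lineDerivOp_snd_wignerKernel (f g : 𝓢(ℝ, ℂ)) :
    ∂₂ (wignerKernel f g) =
      (2⁻¹ : ℂ) • (wignerKernel (∂_{(1 : ℝ)} f) g - wignerKernel f (∂_{(1 : ℝ)} g)) := by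
  have hdir (r : ℝ) (h : 𝓢(ℝ, ℂ)) : ∂_{r} h = r • ∂_{(1 : ℝ)} h := by
    simpa using lineDerivOp_left_smul r (1 : ℝ) h
  have h : ∂₂ (wignerKernel f g) =
      wignerKernel (∂_{(2⁻¹ : ℝ)} f) g + wignerKernel f (∂_{(-2⁻¹ : ℝ)} g) := by
    rw [lineDerivOp_wignerKernel]
    norm_num
  ext z
  simp [h, hdir (2⁻¹) f, hdir (-2⁻¹) g]
  ring

theorem lineDerivOp_lineDerivOp_wignerKernel (f g : 𝓢(ℝ, ℂ)) :
    (4⁻¹ : ℂ) • ∂₁ (∂₁ (wignerKernel f g)) + ∂₂ (∂₁ (wignerKernel f g)) +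
        ∂₂ (∂₂ (wignerKernel f g)) =
      wignerKernel (∂_{(1 : ℝ)} (∂_{(1 : ℝ)} f)) g := by
  simp only [lineDerivOp_fst_wignerKernel, lineDerivOp_snd_wignerKernel, lineDerivOp_add,
    sub_eq_add_neg, lineDerivOp_neg, lineDerivOp_smul]
  module

/-- With `a = u + t/2`: the derivative part is `∂_a² = (½∂_u + ∂_t)²` and `a² = (u + (i/2)(-it))²`,
so the right-hand side is `H₀` acting on the first factor of the kernel. -/
theorem smul_wignerKernel_of_harmOsc {φ : 𝓢(ℝ, ℂ)} {lam : ℂ}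
    (heig : ∀ a, harmOsc φ a = lam * φ a) (χ : 𝓢(ℝ, ℂ)) :
    lam • wignerKernel φ χ =
      mulFst (mulFst (wignerKernel φ χ)) + I • mulFst (mulNegISnd (wignerKernel φ χ)) -
        (4⁻¹ : ℂ) • mulNegISnd (mulNegISnd (wignerKernel φ χ)) -
        ((4⁻¹ : ℂ) • ∂₁ (∂₁ (wignerKernel φ χ)) + ∂₂ (∂₁ (wignerKernel φ χ)) +
          ∂₂ (∂₂ (wignerKernel φ χ))) := by
  rw [lineDerivOp_lineDerivOp_wignerKernel]
  ext z
  have h := heig (z.1 + z.2 / 2)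
  simp only [harmOsc] at h
  simp only [smul_apply, add_apply, sub_apply, mulFst_apply, mulNegISnd_apply,
    wignerKernel_apply, coe_lineDerivOp_one, smul_eq_mul]
  push_cast at h ⊢
  linear_combination (-χ (z.1 - z.2 / 2)) * h +
    φ (z.1 + z.2 / 2) * χ (z.1 - z.2 / 2) * (z.1 * z.2 + z.2 ^ 2 / 4) * I_sq

def scaledLandau (W : 𝓢(ℝ × ℝ, ℂ)) (z : ℝ × ℝ) : ℂ :=
  -(4⁻¹ * (∂₁ (∂₁ W) z + ∂₂ (∂₂ W) z)) + I * (z.1 * ∂₂ W z - z.2 * ∂₁ W z) +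
    (z.1 ^ 2 + z.2 ^ 2) * W z

theorem scaledLandau_partialFourier_wignerKernel {φ : 𝓢(ℝ, ℂ)} {lam : ℂ}
    (heig : ∀ a, harmOsc φ a = lam * φ a) (χ : 𝓢(ℝ, ℂ)) (z : ℝ × ℝ) :
    scaledLandau (partialFourier (wignerKernel φ χ)) z =
      lam * partialFourier (wignerKernel φ χ) z := by
  have h := congrArg (partialFourierIntegral · z) (smul_wignerKernel_of_harmOsc heig χ)
  simp only [map_add, map_sub, map_smul, Pi.add_apply, Pi.sub_apply, Pi.smul_apply, smul_eq_mul,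
    partialFourierIntegral_mulFst, partialFourierIntegral_lineDerivOp_snd] at h
  simp only [scaledLandau, lineDerivOp_fst_partialFourier, lineDerivOp_snd_partialFourier,
    coe_partialFourier]
  linear_combination -h + (z.2 ^ 2 * partialFourierIntegral (wignerKernel φ χ) z) * I_sq

theorem pdx_const_mul_comp_half (c : ℂ) (W : 𝓢(ℝ × ℝ, ℂ)) :
    pdx (fun a b => c * W (a / 2, b / 2)) = fun a b => c / 2 * ∂₁ W (a / 2, b / 2) := by
  ext a b
  have h : HasDerivAt (fun u : ℝ => (u / 2, b / 2)) ((2⁻¹ : ℝ), (0 : ℝ)) a :=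
    (hasDerivAt_id a |>.div_const 2 |>.congr_deriv (by simp)).prodMk (hasDerivAt_const a _)
  have h' : HasDerivAt (fun u => c * W (u / 2, b / 2)) _ a :=
    ((W.hasFDerivAt (a / 2, b / 2)).comp_hasDerivAt a h).const_mul c
  rw [pdx, h'.deriv, lineDerivOp_apply_eq_fderiv,
    show ((2⁻¹ : ℝ), (0 : ℝ)) = (2⁻¹ : ℝ) • ((1 : ℝ), (0 : ℝ)) by simp, map_smul, real_smul]
  push_cast
  ring

theorem pdy_const_mul_comp_half (c : ℂ) (W : 𝓢(ℝ × ℝ, ℂ)) :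
    pdy (fun a b => c * W (a / 2, b / 2)) = fun a b => c / 2 * ∂₂ W (a / 2, b / 2) := by
  ext a b
  have h : HasDerivAt (fun v : ℝ => (a / 2, v / 2)) ((0 : ℝ), (2⁻¹ : ℝ)) b :=
    (hasDerivAt_const b _).prodMk (hasDerivAt_id b |>.div_const 2 |>.congr_deriv (by simp))
  have h' : HasDerivAt (fun v => c * W (a / 2, v / 2)) _ b :=
    ((W.hasFDerivAt (a / 2, b / 2)).comp_hasDerivAt b h).const_mul c
  rw [pdy, h'.deriv, lineDerivOp_apply_eq_fderiv,
    show ((0 : ℝ), (2⁻¹ : ℝ)) = (2⁻¹ : ℝ) • ((0 : ℝ), (1 : ℝ)) by simp, map_smul, real_smul]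
  push_cast
  ring

theorem landauOp_const_mul_comp_half (c : ℂ) (W : 𝓢(ℝ × ℝ, ℂ)) (x y : ℝ) :
    landauOp (fun a b => c * W (a / 2, b / 2)) x y = c * scaledLandau W (x / 2, y / 2) := by
  simp only [landauOp, scaledLandau, pdx_const_mul_comp_half, pdy_const_mul_comp_half]
  push_cast
  ring

theorem stmt15 (φ : SchwartzMap ℝ ℂ) (hφ : φ ≠ 0) (lam : ℂ)
    (heig : ∀ t : ℝ, harmOsc φ t = lam * φ t)
    (θ : SchwartzMap ℝ ℂ) (hθ : θ ≠ 0) :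
    (∃ G : SchwartzMap (ℝ × ℝ) ℂ,
      ∀ x y : ℝ, G (x, y) = crossWigner1 φ θ (x / 2) (y / 2)) ∧
    (∃ x y : ℝ, crossWigner1 φ θ (x / 2) (y / 2) ≠ 0) ∧
    (∀ x y : ℝ,
      landauOp (fun a b => crossWigner1 φ θ (a / 2) (b / 2)) x y
        = lam * crossWigner1 φ θ (x / 2) (y / 2)) := by
  set W := partialFourier (wignerKernel φ (conjSchwartz θ))
  refine ⟨?_, ?_, fun x y => ?_⟩
  · let half := ContinuousLinearEquiv.smulLeft (R₁ := ℝ) (M₁ := ℝ × ℝ)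
      (Units.mk0 (2⁻¹ : ℝ) (by norm_num))
    refine ⟨(((2 * π)⁻¹ : ℝ) : ℂ) • compCLMOfContinuousLinearEquiv ℂ half W, fun x y => ?_⟩
    simp [half, crossWigner1_eq, W, div_eq_inv_mul]
  · have hW : W ≠ 0 := by
      simpa [W, partialFourier_eq_zero_iff, wignerKernel_eq_zero_iff, not_or] using ⟨hφ, hθ⟩
    obtain ⟨z, hz⟩ : ∃ z, W z ≠ 0 := by
      by_contra! h
      exact hW (ext h)
    refine ⟨2 * z.1, 2 * z.2, ?_⟩
    simpa [crossWigner1_eq, W, Real.pi_ne_zero] using hz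
  · simp only [crossWigner1_eq]
    rw [landauOp_const_mul_comp_half, scaledLandau_partialFourier_wignerKernel heig]
    ring
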